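/- arXiv:1603.06205 — 8 statements merged into one kernel-verified Lean document; each statement's English description precedes it below -/
import Mathlib

section
/- Every rational solution (a, b) of a^2 + ab + b^2 = 1 is, up to swapping a and b, of the form a = (m^2 - n^2)/(m^2 + mn + n^2), b = (2mn + n^2)/(m^2 + mn + n^2) for some integers m, n. -/
/-!
Projecting the conic `a² + ab + b² = 1` from its rational point `(-1, 0)`: the line of slope
`t` through `(-1, 0)` meets the conic again at `((1 - t²)/(1 + t + t²), (2t + t²)/(1 + t + t²))`,
and clearing the denominator of `t = n/m` gives the integer parametrization. Every solution other than
`(-1, 0)` and `(-1, 1)` is reached with `t = b/(a + 1)`; those two are reached after swapping `a` and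
`b`, since the equation is symmetric and no solution has `a = b = -1`.
-/

section OrderedField

variable {K : Type*} [Field K] [LinearOrder K] [IsStrictOrderedRing K]

theorem one_add_add_sq_pos (t : K) : 0 < 1 + t + t ^ 2 := by
  nlinarith [sq_nonneg (2 * t + 1)]

theorem eq_chord_param {a b t : K} (h : a ^ 2 + a * b + b ^ 2 = 1) (ha : a + 1 ≠ 0)
    (hb : b = t * (a + 1)) :
    a = (1 - t ^ 2) / (1 + t + t ^ 2) ∧ b = (2 * t + t ^ 2) / (1 + t + t ^ 2) := by
  have hD := (one_add_add_sq_pos t).ne'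
  have ha' : a * (1 + t + t ^ 2) = 1 - t ^ 2 := by
    subst hb
    apply mul_left_cancel₀ ha
    linear_combination h
  refine ⟨by rw [eq_div_iff hD, ha'], ?_⟩
  rw [eq_div_iff hD, hb]
  linear_combination t * ha'

end OrderedField

section Homogenize

variable {K : Type*} [Field K] {m : K} (n : K) (hm : m ≠ 0)
include hm

theorem one_sub_sq_div_one_add_add_sq_div :
    (1 - (n / m) ^ 2) / (1 + n / m + (n / m) ^ 2) = (m ^ 2 - n ^ 2) / (m ^ 2 + m * n + n ^ 2) := by
  rw [← mul_div_mul_left _ _ (pow_ne_zero 2 hm)]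
  congr 1 <;> field_simp

theorem two_mul_add_sq_div_one_add_add_sq_div :
    (2 * (n / m) + (n / m) ^ 2) / (1 + n / m + (n / m) ^ 2) =
      (2 * m * n + n ^ 2) / (m ^ 2 + m * n + n ^ 2) := by
  rw [← mul_div_mul_left _ _ (pow_ne_zero 2 hm)]
  congr 1 <;> field_simp

end Homogenize

theorem exists_int_chord_param {a b : ℚ} (h : a ^ 2 + a * b + b ^ 2 = 1) (ha : a + 1 ≠ 0) :
    ∃ m n : ℤ,
      a = ((m : ℚ) ^ 2 - n ^ 2) / ((m : ℚ) ^ 2 + m * n + n ^ 2) ∧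
      b = (2 * (m : ℚ) * n + n ^ 2) / ((m : ℚ) ^ 2 + m * n + n ^ 2) := by
  obtain ⟨t, hbt⟩ : ∃ t, b = t * (a + 1) := ⟨b / (a + 1), (div_mul_cancel₀ b ha).symm⟩
  obtain ⟨ha, hb⟩ := eq_chord_param h ha hbt
  have hden : (t.den : ℚ) ≠ 0 := by exact_mod_cast t.den_ne_zero
  rw [← Rat.num_div_den t, one_sub_sq_div_one_add_add_sq_div _ hden] at ha
  rw [← Rat.num_div_den t, two_mul_add_sq_div_one_add_add_sq_div _ hden] at hb
  exact ⟨t.den, t.num, by exact_mod_cast ha, by exact_mod_cast hb⟩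

theorem stmt_2 (a b : ℚ) (h : a^2 + a*b + b^2 = 1) :
    ∃ m n : ℤ,
      (a = ((m:ℚ)^2 - n^2) / ((m:ℚ)^2 + m*n + n^2) ∧
       b = (2*(m:ℚ)*n + n^2) / ((m:ℚ)^2 + m*n + n^2)) ∨
      (b = ((m:ℚ)^2 - n^2) / ((m:ℚ)^2 + m*n + n^2) ∧
       a = (2*(m:ℚ)*n + n^2) / ((m:ℚ)^2 + m*n + n^2)) := by
  by_cases ha : a + 1 = 0
  · have hb : b + 1 ≠ 0 := by
      rintro hb
      rw [eq_neg_of_add_eq_zero_left ha, eq_neg_of_add_eq_zero_left hb] at h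
      norm_num at h
    obtain ⟨m, n, hbm, ham⟩ := exists_int_chord_param (a := b) (b := a) (by linear_combination h) hb
    exact ⟨m, n, .inr ⟨hbm, ham⟩⟩
  · obtain ⟨m, n, ham, hbm⟩ := exists_int_chord_param h ha
    exact ⟨m, n, .inl ⟨ham, hbm⟩⟩
end

section
/- If rationals a, b with a ≠ b satisfy a^3 + a^2 b + a b^2 + b^3 = 1, then the rationals x = 2/(a+b) and y = 2(a-b)/(a+b) satisfy y^2 = x^3 - 4 (note a + b ≠ 0 since otherwise the cubic equation fails). -/
/-!
The cubic factors as `(a + b) (a² + b²) = 1`. With `s = a + b` and `d = a - b` we have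
`d² + s² = 2 (a² + b²)`, so the curve reads `s (d² + s²) = 2`, i.e. `d² s = 2 - s³`.
Multiplying by `4 / s³` turns this into `(2d/s)² = (2/s)³ - 4`.
-/

lemma cubic_eq_add_mul_sq_add_sq {R : Type*} [CommRing R] (a b : R) :
    a^3 + a^2*b + a*b^2 + b^3 = (a + b) * (a^2 + b^2) := by
  ring

lemma add_ne_zero_of_cubic_eq_one {R : Type*} [CommRing R] [Nontrivial R] {a b : R}
    (h : a^3 + a^2*b + a*b^2 + b^3 = 1) : a + b ≠ 0 :=
  (IsUnit.of_mul_eq_one _ ((cubic_eq_add_mul_sq_add_sq a b).symm.trans h)).ne_zero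

lemma weierstrass_of_cubic_eq_one {K : Type*} [Field K] {a b : K}
    (h : a^3 + a^2*b + a*b^2 + b^3 = 1) :
    (2*(a-b)/(a+b))^2 = (2/(a+b))^3 - 4 := by
  have hs := add_ne_zero_of_cubic_eq_one h
  field_simp
  linear_combination 8 * h

theorem stmt_5_general (a b : ℚ)
    (h : a^3 + a^2*b + a*b^2 + b^3 = 1) :
    (2*(a-b)/(a+b))^2 = (2/(a+b))^3 - 4 :=
  weierstrass_of_cubic_eq_one h

theorem stmt_5 (a b : ℚ) (hab : a ≠ b)
    (h : a^3 + a^2*b + a*b^2 + b^3 = 1) :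
    (2*(a-b)/(a+b))^2 = (2/(a+b))^3 - 4 :=
  stmt_5_general a b h
end

section
/- If rationals x, y with x ≠ 0 satisfy y^2 = x^3 - 4, then a = (y+2)/(2x) and b = -(y-2)/(2x) satisfy a^3 + a^2 b + a b^2 + b^3 = 1. -/
/-! The cubic factors as `(a + b) * (a ^ 2 + b ^ 2)`, and on the curve `a + b = 2 / x` while
`a ^ 2 + b ^ 2 = (y ^ 2 + 4) / (2 * x ^ 2) = x / 2`. -/

theorem cubic_eq_one_of_weierstrass {K : Type*} [Field K] [NeZero (2 : K)] {x y : K}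
    (hx : x ≠ 0) (h : y ^ 2 = x ^ 3 - 4) :
    ((y+2)/(2*x))^3 + ((y+2)/(2*x))^2 * (-(y-2)/(2*x))
      + ((y+2)/(2*x)) * (-(y-2)/(2*x))^2 + (-(y-2)/(2*x))^3 = 1 := by
  field_simp
  linear_combination 8 * h

theorem stmt_6 (x y : ℚ) (hx : x ≠ 0) (h : y^2 = x^3 - 4) :
    ((y+2)/(2*x))^3 + ((y+2)/(2*x))^2 * (-(y-2)/(2*x))
      + ((y+2)/(2*x)) * (-(y-2)/(2*x))^2 + (-(y-2)/(2*x))^3 = 1 :=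
  cubic_eq_one_of_weierstrass hx h
end

section
/- Under the correspondence a = (y+2)/(2x), b = -(y-2)/(2x), a rational point (x,y) on y^2 = x^3 - 4 with x > 0 yields a > 0 and b > 0 if and only if 2^(2/3) < x < 2. -/
theorem stmt_8 (x y : ℚ) (h : y^2 = x^3 - 4) (hx : 0 < x) :
    (0 < (y+2)/(2*x) ∧ 0 < -(y-2)/(2*x)) ↔
      ((2:ℝ)^((2:ℝ)/3) < (x:ℝ) ∧ (x:ℝ) < 2) := by
  have h2x : (0:ℚ) < 2 * x := by linarith
  -- x^3 ≠ 4 since 4 has no rational cube root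
  have hne : x ^ 3 ≠ 4 := by
    intro hc
    have hxr : ((x:ℝ)) ^ 3 = ((4:ℤ):ℝ) := by exact_mod_cast congrArg (Rat.cast (K := ℝ)) hc
    have hz : ∃ z : ℤ, (x:ℝ) = z := by
      by_contra hcon
      exact (Rat.not_irrational x) (irrational_nrt_of_notint_nrt 3 4 hxr hcon (by norm_num))
    obtain ⟨z, hzx⟩ := hz
    have hz3 : z ^ 3 = 4 := by
      have : ((z:ℝ)) ^ 3 = ((4:ℤ):ℝ) := by rw [← hzx]; exact hxr
      exact_mod_cast this
    have h1 : 1 ≤ z := by nlinarith [sq_nonneg z, sq_nonneg (z - 1), sq_nonneg (z + 1)]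
    have h2 : z ≤ 1 := by nlinarith [sq_nonneg (z - 2), sq_nonneg (z + 2)]
    interval_cases z <;> omega
  have h4lt : (4:ℚ) < x ^ 3 := by
    have : (4:ℚ) ≤ x ^ 3 := by nlinarith [sq_nonneg y]
    exact lt_of_le_of_ne this (Ne.symm hne)
  -- first, LHS ↔ -2 < y ∧ y < 2
  have key : (0 < (y+2)/(2*x) ∧ 0 < -(y-2)/(2*x)) ↔ (-2 < y ∧ y < 2) := by
    constructor
    · rintro ⟨h1, h2⟩
      rcases div_pos_iff.mp h1 with ⟨ha, _⟩ | ⟨_, hb⟩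
      · rcases div_pos_iff.mp h2 with ⟨hc, _⟩ | ⟨_, hd⟩
        · constructor <;> linarith
        · linarith
      · linarith
    · rintro ⟨h1, h2⟩
      exact ⟨div_pos (by linarith) h2x, div_pos (by linarith) h2x⟩
  rw [key]
  have hcube : ((2:ℝ)^((2:ℝ)/3)) ^ 3 = 4 := by
    rw [← Real.rpow_natCast ((2:ℝ)^((2:ℝ)/3)) 3, ← Real.rpow_mul (by norm_num)]
    norm_num
  constructor
  · rintro ⟨h1, h2⟩
    have hx8 : x ^ 3 < 8 := by nlinarith
    have hx2 : x < 2 := by nlinarith [sq_nonneg (x - 2), sq_nonneg (x + 2)]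
    constructor
    · apply lt_of_pow_lt_pow_left₀ 3 (by positivity)
      rw [hcube]
      exact_mod_cast h4lt
    · exact_mod_cast hx2
  · rintro ⟨h1, h2⟩
    have hx2 : x < 2 := by exact_mod_cast h2
    have hx8 : x ^ 3 < 8 := by nlinarith [mul_pos hx hx, mul_pos (mul_pos hx hx) hx, sq_nonneg (x + 2)]
    have hy4 : y ^ 2 < 4 := by nlinarith
    constructor <;> nlinarith
end

section
/- If rationals x1, y1 satisfy y1^2 = x1^3 - 4, 2^(2/3) < x1 < 2 and y1 > 0, then x2 defined by x2 = 2·(x1^8 + 8x1^7 − 64x1^6 + 64x1^5 + 224x1^4 + 512x1^3 + 1024x1^2 − 1024x1 − 1024 + (4x1^6 − 320x1^3 − 512)·y1) / (x1^4 − 8x1^3 + 32x1 + 32)^2 satisfies x2 < 2. -/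
theorem stmt_10 (x1 y1 : ℚ) (h : y1^2 = x1^3 - 4)
    (h1 : (2:ℝ)^((2:ℝ)/3) < (x1:ℝ)) (h2 : x1 < 2) (hy : 0 < y1) :
    2 * (x1^8 + 8*x1^7 - 64*x1^6 + 64*x1^5 + 224*x1^4 + 512*x1^3 + 1024*x1^2
        - 1024*x1 - 1024 + (4*x1^6 - 320*x1^3 - 512) * y1)
      / (x1^4 - 8*x1^3 + 32*x1 + 32)^2 < 2 := by
  -- derive 4 < x1^3 in ℚ
  have hx3 : (4:ℚ) < x1^3 := by
    have hb : (0:ℝ) < (2:ℝ)^((2:ℝ)/3) := Real.rpow_pos_of_pos (by norm_num) _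
    have hx0 : (0:ℝ) < (x1:ℝ) := hb.trans h1
    have hcube : ((2:ℝ)^((2:ℝ)/3))^(3:ℕ) < (x1:ℝ)^(3:ℕ) := by
      exact pow_lt_pow_left₀ h1 hb.le (by norm_num)
    have heq : ((2:ℝ)^((2:ℝ)/3))^(3:ℕ) = 4 := by
      rw [← Real.rpow_natCast ((2:ℝ)^((2:ℝ)/3)) 3, ← Real.rpow_mul (by norm_num)]
      norm_num
    rw [heq] at hcube
    exact_mod_cast hcube
  have hx0 : (1:ℚ) < x1 := by nlinarith [sq_nonneg (2*x1+1), sq_nonneg x1]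
  -- denominator positive
  have hq : (0:ℚ) < x1^4 - 8*x1^3 + 32*x1 + 32 := by nlinarith [sq_nonneg x1, sq_nonneg (x1-2), sq_nonneg (x1^2-4)]
  have hd : (0:ℚ) < (x1^4 - 8*x1^3 + 32*x1 + 32)^2 := by positivity
  rw [div_lt_iff₀ hd]
  -- reduce to A + B*y1 < 0
  have hB : 4*x1^6 - 320*x1^3 - 512 < 0 := by nlinarith [sq_nonneg x1, sq_nonneg (x1^3)]
  set A : ℚ := 24*x1^7 - 128*x1^6 + 672*x1^4 + 1024*x1^3 - 3072*x1 - 2048 with hA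
  have key : A + (4*x1^6 - 320*x1^3 - 512)*y1 < 0 := by
    rcases le_or_gt A 0 with hA0 | hA0
    · have : (4*x1^6 - 320*x1^3 - 512)*y1 < 0 := mul_neg_of_neg_of_pos hB hy
      linarith
    · -- R > 0
      have hR : (0:ℚ) < 655360 + 1900544*x1 + 2129920*x1^2 + 835584*x1^3 - 319488*x1^4
          - 380928*x1^5 - 43008*x1^6 + 52224*x1^7 + 8832*x1^8 - 5056*x1^9 + 544*x1^10
          - 16*x1^11 := by
        nlinarith [mul_pos (sub_pos.mpr h2) (sub_pos.mpr h2), sq_nonneg (x1-1), sq_nonneg (x1-2),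
          mul_pos (mul_pos (sub_pos.mpr hx0) (sub_pos.mpr hx0)) (sub_pos.mpr h2),
          sq_nonneg (x1^2-2*x1), sq_nonneg (x1^3-2*x1^2), sq_nonneg (x1^4-2*x1^3),
          sq_nonneg (x1^5-2*x1^4), pow_pos (lt_trans one_pos hx0) 5,
          mul_pos (pow_pos (lt_trans one_pos hx0) 5) (sub_pos.mpr h2)]
      have hC : A^2 - (4*x1^6 - 320*x1^3 - 512)^2 * (x1^3 - 4) < 0 := by
        have factored : A^2 - (4*x1^6 - 320*x1^3 - 512)^2 * (x1^3 - 4)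
            = (x1 - 2) * ((x1^3 - 4) * (655360 + 1900544*x1 + 2129920*x1^2 + 835584*x1^3
              - 319488*x1^4 - 380928*x1^5 - 43008*x1^6 + 52224*x1^7 + 8832*x1^8
              - 5056*x1^9 + 544*x1^10 - 16*x1^11)) := by
          rw [hA]; ring
        rw [factored]
        exact mul_neg_of_neg_of_pos (by linarith) (mul_pos (by linarith) hR)
      have hpos : 0 < A - (4*x1^6 - 320*x1^3 - 512)*y1 := by
        have : (4*x1^6 - 320*x1^3 - 512)*y1 < 0 := mul_neg_of_neg_of_pos hB hy
        linarith
      by_contra hcon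
      push_neg at hcon
      have hmul : 0 ≤ (A + (4*x1^6 - 320*x1^3 - 512)*y1) * (A - (4*x1^6 - 320*x1^3 - 512)*y1) :=
        mul_nonneg hcon hpos.le
      nlinarith [hmul, hC, h]
  nlinarith [key]
end

section
/- For real numbers x1, y1 with y1^2 = x1^3 - 4, 2^(2/3) < x1 < 2 and y1 > 0, we have ((−x1^6 + 80x1^3 + 128)·y1)^2 − (2(3x1^4 − 16x1^3 + 96x1 + 64)(x1^3 − 4))^2 = (x1 − 2)(x1^3 − 4)(x1^3 − 18x1^2 − 36x1 − 40)(x1^4 − 8x1^3 + 32x1 + 32)^2, and this quantity is positive. -/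
theorem stmt_11 (x1 y1 : ℝ) (h : y1^2 = x1^3 - 4)
    (h1 : (2:ℝ)^((2:ℝ)/3) < x1) (h2 : x1 < 2) (hy : 0 < y1) :
    ((-x1^6 + 80*x1^3 + 128) * y1)^2
        - (2*(3*x1^4 - 16*x1^3 + 96*x1 + 64)*(x1^3 - 4))^2
      = (x1 - 2)*(x1^3 - 4)*(x1^3 - 18*x1^2 - 36*x1 - 40)
          *(x1^4 - 8*x1^3 + 32*x1 + 32)^2 ∧
    0 < ((-x1^6 + 80*x1^3 + 128) * y1)^2
        - (2*(3*x1^4 - 16*x1^3 + 96*x1 + 64)*(x1^3 - 4))^2 := by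
  have ha : (0:ℝ) ≤ (2:ℝ)^((2:ℝ)/3) := Real.rpow_nonneg (by norm_num) _
  have ha3 : ((2:ℝ)^((2:ℝ)/3))^3 = 4 := by
    rw [← Real.rpow_natCast ((2:ℝ)^((2:ℝ)/3)) 3, ← Real.rpow_mul (by norm_num)]
    norm_num
  have hx3 : 4 < x1^3 := by
    calc (4:ℝ) = ((2:ℝ)^((2:ℝ)/3))^3 := ha3.symm
    _ < x1^3 := by
      apply pow_lt_pow_left₀ h1 ha
      norm_num
  have h1' : (1:ℝ) < x1 := by nlinarith [hx3, sq_nonneg (x1+1), sq_nonneg (x1-1)]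
  have heq : ((-x1^6 + 80*x1^3 + 128) * y1)^2
        - (2*(3*x1^4 - 16*x1^3 + 96*x1 + 64)*(x1^3 - 4))^2
      = (x1 - 2)*(x1^3 - 4)*(x1^3 - 18*x1^2 - 36*x1 - 40)
          *(x1^4 - 8*x1^3 + 32*x1 + 32)^2 := by
    have : y1^2 = x1^3 - 4 := h
    nlinarith [this, sq_nonneg y1]
  refine ⟨heq, ?_⟩
  rw [heq]
  have hneg1 : x1 - 2 < 0 := by linarith
  have hpos1 : 0 < x1^3 - 4 := by linarith
  have hneg2 : x1^3 - 18*x1^2 - 36*x1 - 40 < 0 := by nlinarith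
  have hsq : 0 < x1^4 - 8*x1^3 + 32*x1 + 32 := by nlinarith
  have := mul_pos (mul_pos (mul_pos_of_neg_of_neg hneg1 hneg2) hpos1) (mul_pos hsq hsq)
  nlinarith [this]
end

section
/- (62304353849776801/1423276677734560000)^(1/4) + 5497/17270 = (62304353849776801/1423276677734560000 + 5497/17270)^(1/4), as an identity of real numbers. -/
lemma aux16 (c : ℝ) (hc : 0 ≤ c) : ((c ^ (4:ℕ)) : ℝ) ^ ((1:ℝ)/4) = c := by
  rw [← Real.rpow_natCast c 4, ← Real.rpow_mul hc]
  norm_num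

theorem stmt_16 :
    (62304353849776801/1423276677734560000 : ℝ) ^ ((1:ℝ)/4) + 5497/17270
      = ((62304353849776801/1423276677734560000 : ℝ) + 5497/17270) ^ ((1:ℝ)/4) := by
  have h1 : (62304353849776801/1423276677734560000 : ℝ) = (15799/34540 : ℝ) ^ (4:ℕ) := by
    norm_num
  have h2 : (62304353849776801/1423276677734560000 : ℝ) + 5497/17270
      = (26793/34540 : ℝ) ^ (4:ℕ) := by norm_num
  rw [h2, h1, aux16 _ (by norm_num), aux16 _ (by norm_num)]
  norm_num
end

section
/- If positive rationals a > b satisfy a^k = b^k + a - b for a positive integer k ≥ 2, then setting a1 = 1/a and r = b/a, one has 0 < r < 1, 0 < r^k < 1, and a1/(1 - r) = a1^k/(1 - r^k). -/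
theorem one_div_div_one_sub_div {K : Type*} [Field K] {a : K} (ha : a ≠ 0) (b : K) :
    1 / a / (1 - b / a) = 1 / (a - b) := by
  rw [one_sub_div ha, div_div_div_cancel_right₀ ha]

theorem stmt_18 (a b : ℚ) (k : ℕ) (hk : 2 ≤ k)
    (hb : 0 < b) (hba : b < a) (h : a^k = b^k + a - b) :
    0 < b/a ∧ b/a < 1 ∧ 0 < (b/a)^k ∧ (b/a)^k < 1 ∧
    (1/a) / (1 - b/a) = (1/a)^k / (1 - (b/a)^k) := by
  have ha : 0 < a := hb.trans hba
  have hr : 0 < b / a := div_pos hb ha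
  have hr1 : b / a < 1 := (div_lt_one ha).mpr hba
  refine ⟨hr, hr1, pow_pos hr k, pow_lt_one₀ hr.le hr1 (by omega), ?_⟩
  -- both sums reduce to `1 / (a - b)` and `1 / (a ^ k - b ^ k)`, equal by `h`
  rw [one_div_pow, div_pow, one_div_div_one_sub_div ha.ne',
    one_div_div_one_sub_div (pow_ne_zero k ha.ne'), h]
  ring
end
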